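/- Let Σ be a real symmetric positive definite n×n matrix, K ⊆ {1,…,n}, and i, j distinct indices not in K. Equality det(Σ_{K∪{i}})·det(Σ_{K∪{j}}) = det(Σ_{K∪{i,j}})·det(Σ_K) holds if and only if the almost-principal minor [i⊥j|K] of Σ (the subdeterminant with row indices {i}∪K and column indices {j}∪K) vanishes. -/

import Mathlib

/-- Principal minor of `S` on the index set `T`. -/
def principalMinor {n : ℕ} (S : Matrix (Fin n) (Fin n) ℝ) (T : Finset (Fin n)) : ℝ :=
  (S.submatrix (fun a : T => (a : Fin n)) (fun a : T => (a : Fin n))).det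

/-- Almost-principal minor `[i ⫫ j | K]`: the subdeterminant of `S` with row indices
`{i} ∪ K` and column indices `{j} ∪ K`. -/
def almostPrincipalMinor {n : ℕ} (S : Matrix (Fin n) (Fin n) ℝ)
    (i j : Fin n) (K : Finset (Fin n)) : ℝ :=
  (S.submatrix (Sum.elim (fun _ : Unit => i) (fun k : K => (k : Fin n)))
               (Sum.elim (fun _ : Unit => j) (fun k : K => (k : Fin n)))).det

/-!
Put `C = S - S[·,K] S[K,K]⁻¹ S[K,·]`, the Schur complement of the block on `K`. Schur's
determinant formula gives `det S[P ∪ K] = det S[K] · det C[P]` for `P` disjoint from `K`, and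
likewise `[i ⫫ j | K] = det S[K] · C i j`. Expanding the 2×2 minor `det C[{i, j}]` yields
Sylvester's identity
`det S[K ∪ i] · det S[K ∪ j] - det S[K ∪ {i, j}] · det S[K] = [i ⫫ j | K] · [j ⫫ i | K]`,
and for symmetric `S` the right-hand side is the square `[i ⫫ j | K]²`.
-/

open Matrix

/-- Stored as a matrix on all of `m`; only its entries off the range of `e` are meaningful. -/
noncomputable def schurCompl {m κ R : Type*} [Fintype κ] [DecidableEq κ] [CommRing R]
    (S : Matrix m m R) (e : κ → m) : Matrix m m R :=
  S - S.submatrix id e * (S.submatrix e e)⁻¹ * S.submatrix e id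

theorem det_submatrix_sumElim {m κ ι R : Type*} [Fintype κ] [DecidableEq κ] [Fintype ι]
    [DecidableEq ι] [CommRing R] (S : Matrix m m R) (e : κ → m)
    (he : IsUnit (S.submatrix e e).det) (r c : ι → m) :
    (S.submatrix (Sum.elim r e) (Sum.elim c e)).det =
      (S.submatrix e e).det * ((schurCompl S e).submatrix r c).det := by
  let := invertibleOfIsUnitDet _ he
  have hblocks : S.submatrix (Sum.elim r e) (Sum.elim c e) = fromBlocks (S.submatrix r c)
      (S.submatrix r e) (S.submatrix e c) (S.submatrix e e) := by
    ext (a | a) (b | b) <;> rfl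
  rw [hblocks, det_fromBlocks₂₂, invOf_eq_nonsing_inv]
  rfl

theorem principalMinor_union {n : ℕ} (S : Matrix (Fin n) (Fin n) ℝ) {P K : Finset (Fin n)}
    (hPK : Disjoint P K) (hK : IsUnit (principalMinor S K)) :
    principalMinor S (P ∪ K) =
      principalMinor S K * principalMinor (schurCompl S ((↑) : K → Fin n)) P := by
  rw [principalMinor, ← det_submatrix_equiv_self (Equiv.Finset.union P K hPK),
    submatrix_submatrix]
  have hunion : ((↑) : ↥(P ∪ K) → Fin n) ∘ Equiv.Finset.union P K hPK = Sum.elim (↑) (↑) := by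
    ext (a | a) <;> rfl
  rw [hunion]
  exact det_submatrix_sumElim S _ hK _ _

theorem almostPrincipalMinor_eq_mul_schurCompl {n : ℕ} (S : Matrix (Fin n) (Fin n) ℝ)
    (i j : Fin n) {K : Finset (Fin n)} (hK : IsUnit (principalMinor S K)) :
    almostPrincipalMinor S i j K = principalMinor S K * schurCompl S ((↑) : K → Fin n) i j := by
  rw [almostPrincipalMinor, det_submatrix_sumElim S _ hK, det_unique (n := Unit)]
  rfl

theorem principalMinor_singleton {n : ℕ} (M : Matrix (Fin n) (Fin n) ℝ) (i : Fin n) :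
    principalMinor M {i} = M i i := by
  rw [principalMinor, det_unique]
  rfl

theorem principalMinor_pair {n : ℕ} (M : Matrix (Fin n) (Fin n) ℝ) {i j : Fin n} (hij : i ≠ j) :
    principalMinor M {i, j} = M i i * M j j - M i j * M j i := by
  have hbij : Function.Bijective
      (fun a : Fin 2 ↦ (⟨![i, j] a, by fin_cases a <;> simp⟩ : ↥({i, j} : Finset (Fin n)))) := by
    rw [Fintype.bijective_iff_injective_and_card]
    refine ⟨fun a b hab ↦ ?_, by rw [Fintype.card_coe, Finset.card_pair hij, Fintype.card_fin]⟩
    have hab := congrArg Subtype.val hab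
    fin_cases a <;> fin_cases b <;> first | rfl | simp [hij, hij.symm] at hab
  rw [principalMinor, ← det_submatrix_equiv_self (Equiv.ofBijective _ hbij), det_fin_two]
  rfl

theorem almostPrincipalMinor_comm {n : ℕ} {S : Matrix (Fin n) (Fin n) ℝ} (hS : S.IsSymm)
    (i j : Fin n) (K : Finset (Fin n)) :
    almostPrincipalMinor S j i K = almostPrincipalMinor S i j K := by
  rw [almostPrincipalMinor, ← det_transpose, transpose_submatrix, hS.eq]
  rfl

theorem principalMinor_insert_mul_insert_sub {n : ℕ} (S : Matrix (Fin n) (Fin n) ℝ)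
    {K : Finset (Fin n)} {i j : Fin n} (hij : i ≠ j) (hi : i ∉ K) (hj : j ∉ K)
    (hK : IsUnit (principalMinor S K)) :
    principalMinor S (insert i K) * principalMinor S (insert j K) -
        principalMinor S (insert i (insert j K)) * principalMinor S K =
      almostPrincipalMinor S i j K * almostPrincipalMinor S j i K := by
  have hpair : insert i (insert j K) = {i, j} ∪ K := by
    rw [Finset.insert_union, ← Finset.insert_eq]
  rw [hpair, Finset.insert_eq i, Finset.insert_eq j,
    principalMinor_union S (Finset.disjoint_singleton_left.mpr hi) hK,
    principalMinor_union S (Finset.disjoint_singleton_left.mpr hj) hK,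
    principalMinor_union S (by simp [hi, hj]) hK,
    principalMinor_singleton, principalMinor_singleton, principalMinor_pair _ hij,
    almostPrincipalMinor_eq_mul_schurCompl S i j hK,
    almostPrincipalMinor_eq_mul_schurCompl S j i hK]
  ring

theorem koteljanskii_equality_iff {n : ℕ} (S : Matrix (Fin n) (Fin n) ℝ)
    (hsymm : S.IsSymm) (hpd : S.PosDef)
    (K : Finset (Fin n)) (i j : Fin n) (hij : i ≠ j) (hi : i ∉ K) (hj : j ∉ K) :
    principalMinor S (insert i K) * principalMinor S (insert j K) =
      principalMinor S (insert i (insert j K)) * principalMinor S K ↔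
    almostPrincipalMinor S i j K = 0 := by
  have hK : IsUnit (principalMinor S K) :=
    (isUnit_iff_isUnit_det _).mp (hpd.submatrix Subtype.coe_injective).isUnit
  rw [← sub_eq_zero, principalMinor_insert_mul_insert_sub S hij hi hj hK,
    almostPrincipalMinor_comm hsymm, mul_self_eq_zero]
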